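/- arXiv:math/9911015 — 2 statements merged into one kernel-verified Lean document; each statement's English description precedes it below -/
import Mathlib

section
/- Let (U₁, U₂) be a type III pair: upper triangular matrices with internal relations αᵢγᵢ = γᵢαᵢ and αᵢβᵢ = rβᵢγᵢ, and mutual relations α₁α₂ = qα₂α₁, α₁γ₂ = q⁻¹γ₂α₁, α₂γ₁ = qγ₁α₂, γ₁γ₂ = qγ₂γ₁, α₁β₂ = qβ₂γ₁, β₁γ₂ = qα₂β₁. Then for all integers n, the entries of U₁^n U₂^n = [[α(n,n), β(n,n)], [0, γ(n,n)]] satisfy α(n,n)γ(n,n) = γ(n,n)α(n,n) and α(n,n)β(n,n) = r^n β(n,n)γ(n,n). -/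
/-!
If `a * b = r • (b * c)`, every power of `!![a, b; 0, c]` is `!![aⁿ, μ • (b * cⁿ⁻¹); 0, cⁿ]` for a
scalar `μ`, and the relations are homogeneous in the corner. Hence all relations of a type III pair
`(U₁, U₂)` with parameters `(q, r)` pass to `(U₁ⁿ, U₂ⁿ)` with parameters `(q ^ (n * n), r ^ n)`, and
it suffices to check the internal relations for the product `U₁ U₂` of a single type III pair.
-/

section
variable {k A : Type*} [Field k] [Ring A] [Algebra k A]

theorem Units.zpow_mul_eq_smul_mul_zpow {a c : Aˣ} {b : A} {t : k} (ht : t ≠ 0)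
    (h : (a : A) * b = t • (b * c)) (n : ℤ) :
    ((a ^ n : Aˣ) : A) * b = t ^ n • (b * (c ^ n : Aˣ)) := by
  set u : Aˣ := Units.map (algebraMap k A : k →* A) (Units.mk0 t ht)
  have hu (m : ℤ) : ((u ^ m : Aˣ) : A) = algebraMap k A (t ^ m) := by
    rw [← map_zpow, Units.coe_map, Units.val_zpow_eq_zpow_val, Units.val_mk0]; rfl
  -- `u * c` is the unit `t • c`
  have hs : SemiconjBy b ↑(u * c) ↑a := by
    rw [SemiconjBy, Units.val_mul, ← zpow_one u, hu, zpow_one, ← Algebra.smul_def,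
      mul_smul_comm, h]
  have hc : Commute u c := Units.ext (Algebra.commutes t _)
  rw [← (hs.units_zpow_right n).eq, hc.mul_zpow, Units.val_mul, hu, ← Algebra.smul_def,
    mul_smul_comm]

theorem Units.mul_zpow_eq_smul_zpow_mul {a c : Aˣ} {b : A} {t : k} (ht : t ≠ 0)
    (h : b * c = t • ((a : A) * b)) (n : ℤ) :
    b * (c ^ n : Aˣ) = t ^ n • (((a ^ n : Aˣ) : A) * b) := by
  have h' : (a : A) * b = t⁻¹ • (b * c) := (eq_inv_smul_iff₀ ht).mpr h.symm
  rw [Units.zpow_mul_eq_smul_mul_zpow (inv_ne_zero ht) h' n, inv_zpow, smul_smul,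
    mul_inv_cancel₀ (zpow_ne_zero n ht), one_smul]

theorem Units.zpow_mul_zpow_eq_smul {u v : Aˣ} {t : k} (ht : t ≠ 0)
    (h : (u : A) * v = t • ((v : A) * u)) (m n : ℤ) :
    ((u ^ m : Aˣ) : A) * (v ^ n : Aˣ) = t ^ (m * n) • (((v ^ n : Aˣ) : A) * (u ^ m : Aˣ)) := by
  rw [zpow_mul, Units.mul_zpow_eq_smul_zpow_mul (zpow_ne_zero m ht)
    (Units.zpow_mul_eq_smul_mul_zpow ht h m)]

theorem mul_mul_eq_smul_mul_mul {x b w y z : A} {s t : k} (hb : x * b = s • (b * w))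
    (hy : w * y = t • (y * z)) : x * (b * y) = (s * t) • (b * y * z) := by
  rw [← mul_assoc, hb, smul_mul_assoc, mul_assoc, hy, mul_smul_comm, smul_smul, mul_assoc]

theorem mul_mul_eq_smul_mul_mul' {x b w y z : A} {s t : k} (hb : b * w = s • (x * b))
    (hy : y * w = t • (w * z)) : b * y * w = (s * t) • (x * (b * z)) := by
  rw [mul_assoc, hy, mul_smul_comm, ← mul_assoc, hb, smul_mul_assoc, smul_smul, mul_comm t,
    mul_assoc]

theorem upperTriangular_mul_upperTriangular (a b c a' b' c' : A) :
    !![a, b; 0, c] * !![a', b'; 0, c'] = !![a * a', a * b' + b * c'; 0, c * c'] := by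
  simp

theorem upperTriangular_val_inv {V : (Matrix (Fin 2) (Fin 2) A)ˣ} {a c : Aˣ} {b : A}
    (hV : V.val = !![(a : A), b; 0, c]) :
    (V⁻¹).val = !![((a⁻¹ : Aˣ) : A), -(↑a⁻¹ * b * ↑c⁻¹); 0, ↑c⁻¹] := by
  refine Units.inv_eq_of_mul_eq_one_right ?_
  rw [hV, upperTriangular_mul_upperTriangular, Matrix.one_fin_two]
  simp [← mul_assoc]

theorem exists_zpow_val_eq_upperTriangular {V : (Matrix (Fin 2) (Fin 2) A)ˣ} {a c : Aˣ} {b : A}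
    {r : k} (hr : r ≠ 0) (h : (a : A) * b = r • (b * c)) (hV : V.val = !![(a : A), b; 0, c])
    (n : ℤ) : ∃ μ : k,
      (V ^ n).val = !![((a ^ n : Aˣ) : A), μ • (b * (c ^ (n - 1) : Aˣ)); 0, (c ^ n : Aˣ)] := by
  induction n using Int.induction_on with
  | zero => exact ⟨0, by simp [Matrix.one_fin_two]⟩
  | succ n ih =>
    obtain ⟨μ, hμ⟩ := ih
    have hcorner : ((a ^ (n : ℤ) : Aˣ) : A) * b + μ • (b * (c ^ ((n : ℤ) - 1) : Aˣ)) * c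
        = (r ^ (n : ℤ) + μ) • (b * (c ^ (n : ℤ) : Aˣ)) := by
      rw [Units.zpow_mul_eq_smul_mul_zpow hr h, smul_mul_assoc, mul_assoc, ← Units.val_mul,
        ← zpow_add_one, sub_add_cancel, add_smul]
    refine ⟨r ^ (n : ℤ) + μ, ?_⟩
    rw [zpow_add_one, Units.val_mul, hμ, hV, upperTriangular_mul_upperTriangular, hcorner,
      ← Units.val_mul, ← Units.val_mul, ← zpow_add_one, ← zpow_add_one, add_sub_cancel_right]
  | pred n ih =>
    obtain ⟨μ, hμ⟩ := ih
    have hcorner : ((a ^ (-(n : ℤ)) : Aˣ) : A) * -(↑a⁻¹ * b * ↑c⁻¹)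
          + μ • (b * (c ^ (-(n : ℤ) - 1) : Aˣ)) * ↑c⁻¹
        = (μ - r ^ (-(n : ℤ) - 1)) • (b * (c ^ (-(n : ℤ) - 1 - 1) : Aˣ)) := by
      rw [mul_neg, ← mul_assoc, ← mul_assoc, ← Units.val_mul, ← zpow_sub_one,
        Units.zpow_mul_eq_smul_mul_zpow hr h, smul_mul_assoc, smul_mul_assoc, mul_assoc,
        ← Units.val_mul, ← zpow_sub_one, sub_smul, neg_add_eq_sub]
    refine ⟨μ - r ^ (-(n : ℤ) - 1), ?_⟩
    rw [zpow_sub_one, Units.val_mul, hμ, upperTriangular_val_inv hV,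
      upperTriangular_mul_upperTriangular, hcorner, ← Units.val_mul, ← Units.val_mul,
      ← zpow_sub_one, ← zpow_sub_one]

/-- The relations (ID2), (IND2), (MD2), (MND) of a type III pair `Uᵢ = !![αᵢ, βᵢ; 0, γᵢ]`. -/
structure IsTypeIIIPair (q r : k) (α₁ γ₁ α₂ γ₂ β₁ β₂ : A) : Prop where
  comm₁ : Commute α₁ γ₁
  comm₂ : Commute α₂ γ₂
  twist₁ : α₁ * β₁ = r • (β₁ * γ₁)
  twist₂ : α₂ * β₂ = r • (β₂ * γ₂)
  α₁α₂ : α₁ * α₂ = q • (α₂ * α₁)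
  α₁γ₂ : α₁ * γ₂ = q⁻¹ • (γ₂ * α₁)
  α₂γ₁ : α₂ * γ₁ = q • (γ₁ * α₂)
  γ₁γ₂ : γ₁ * γ₂ = q • (γ₂ * γ₁)
  α₁β₂ : α₁ * β₂ = q • (β₂ * γ₁)
  β₁γ₂ : β₁ * γ₂ = q • (α₂ * β₁)

namespace IsTypeIIIPair

variable {q r : k}

theorem zpow {α₁ γ₁ α₂ γ₂ : Aˣ} {β₁ β₂ : A} (hq : q ≠ 0) (hr : r ≠ 0)
    (P : IsTypeIIIPair q r (α₁ : A) γ₁ α₂ γ₂ β₁ β₂) (n : ℤ) :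
    IsTypeIIIPair (q ^ (n * n)) (r ^ n)
      ((α₁ ^ n : Aˣ) : A) (γ₁ ^ n : Aˣ) (α₂ ^ n : Aˣ) (γ₂ ^ n : Aˣ)
      (β₁ * (γ₁ ^ (n - 1) : Aˣ)) (β₂ * (γ₂ ^ (n - 1) : Aˣ)) := by
  have hqn : q ^ n * q ^ (n * (n - 1)) = q ^ (n * n) := by
    rw [← zpow_add₀ hq]; ring_nf
  constructor
  · exact (P.comm₁.units_zpow_left n).units_zpow_right n
  · exact (P.comm₂.units_zpow_left n).units_zpow_right n
  · rw [← mul_assoc, Units.zpow_mul_eq_smul_mul_zpow hr P.twist₁, smul_mul_assoc, mul_assoc,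
      mul_assoc, ((Commute.refl (γ₁ : A)).units_zpow_left n).units_zpow_right (n - 1) |>.eq]
  · rw [← mul_assoc, Units.zpow_mul_eq_smul_mul_zpow hr P.twist₂, smul_mul_assoc, mul_assoc,
      mul_assoc, ((Commute.refl (γ₂ : A)).units_zpow_left n).units_zpow_right (n - 1) |>.eq]
  · exact Units.zpow_mul_zpow_eq_smul hq P.α₁α₂ n n
  · rw [Units.zpow_mul_zpow_eq_smul (inv_ne_zero hq) P.α₁γ₂, inv_zpow]
  · exact Units.zpow_mul_zpow_eq_smul hq P.α₂γ₁ n n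
  · exact Units.zpow_mul_zpow_eq_smul hq P.γ₁γ₂ n n
  · rw [← hqn]
    exact mul_mul_eq_smul_mul_mul (Units.zpow_mul_eq_smul_mul_zpow hq P.α₁β₂ n)
      (Units.zpow_mul_zpow_eq_smul hq P.γ₁γ₂ n (n - 1))
  · rw [← hqn, mul_comm n]
    exact mul_mul_eq_smul_mul_mul' (Units.mul_zpow_eq_smul_zpow_mul hq P.β₁γ₂ n)
      (Units.zpow_mul_zpow_eq_smul hq P.γ₁γ₂ (n - 1) n)

variable {α₁ γ₁ α₂ γ₂ β₁ β₂ : A}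

theorem smul (P : IsTypeIIIPair q r α₁ γ₁ α₂ γ₂ β₁ β₂) (c₁ c₂ : k) :
    IsTypeIIIPair q r α₁ γ₁ α₂ γ₂ (c₁ • β₁) (c₂ • β₂) where
  __ := P
  twist₁ := by rw [mul_smul_comm, P.twist₁, smul_mul_assoc, smul_comm]
  twist₂ := by rw [mul_smul_comm, P.twist₂, smul_mul_assoc, smul_comm]
  α₁β₂ := by rw [mul_smul_comm, P.α₁β₂, smul_mul_assoc, smul_comm]
  β₁γ₂ := by rw [smul_mul_assoc, P.β₁γ₂, mul_smul_comm, smul_comm]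

theorem commute_mul (hq : q ≠ 0) (P : IsTypeIIIPair q r α₁ γ₁ α₂ γ₂ β₁ β₂) :
    Commute (α₁ * α₂) (γ₁ * γ₂) :=
  calc α₁ * α₂ * (γ₁ * γ₂)
      = α₁ * (α₂ * γ₁) * γ₂ := by simp only [mul_assoc]
    _ = q • (α₁ * γ₁ * (α₂ * γ₂)) := by
      rw [P.α₂γ₁, mul_smul_comm, smul_mul_assoc]; simp only [mul_assoc]
    _ = q • (γ₁ * (α₁ * γ₂) * α₂) := by rw [P.comm₁.eq, P.comm₂.eq]; simp only [mul_assoc]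
    _ = γ₁ * γ₂ * (α₁ * α₂) := by
      rw [P.α₁γ₂, mul_smul_comm, smul_mul_assoc, smul_smul, mul_inv_cancel₀ hq, one_smul]
      simp only [mul_assoc]

theorem twist_mul (hq : q ≠ 0) (P : IsTypeIIIPair q r α₁ γ₁ α₂ γ₂ β₁ β₂) :
    α₁ * α₂ * (α₁ * β₂ + β₁ * γ₂) = r • ((α₁ * β₂ + β₁ * γ₂) * (γ₁ * γ₂)) := by
  have hγ : γ₂ * γ₁ = q⁻¹ • (γ₁ * γ₂) := (eq_inv_smul_iff₀ hq).mpr P.γ₁γ₂.symm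
  have hαβ : α₂ * β₁ = q⁻¹ • (β₁ * γ₂) := (eq_inv_smul_iff₀ hq).mpr P.β₁γ₂.symm
  have h₁ : α₁ * α₂ * (α₁ * β₂) = r • (α₁ * β₂ * (γ₁ * γ₂)) :=
    calc α₁ * α₂ * (α₁ * β₂)
        = q • (α₁ * (α₂ * β₂) * γ₁) := by
          rw [P.α₁β₂, mul_smul_comm]; simp only [mul_assoc]
      _ = (q * r) • (α₁ * β₂ * (γ₂ * γ₁)) := by
          rw [P.twist₂, mul_smul_comm, smul_mul_assoc, smul_smul]; simp only [mul_assoc]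
      _ = r • (α₁ * β₂ * (γ₁ * γ₂)) := by
          rw [hγ, mul_smul_comm, smul_smul, mul_comm q, mul_assoc, mul_inv_cancel₀ hq, mul_one]
  have h₂ : α₁ * α₂ * (β₁ * γ₂) = r • (β₁ * γ₂ * (γ₁ * γ₂)) :=
    calc α₁ * α₂ * (β₁ * γ₂)
        = q⁻¹ • (α₁ * β₁ * (γ₂ * γ₂)) := by
          rw [mul_assoc, ← mul_assoc α₂, hαβ, smul_mul_assoc, mul_smul_comm]
          simp only [mul_assoc]
      _ = (q⁻¹ * r) • (β₁ * (γ₁ * γ₂) * γ₂) := by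
          rw [P.twist₁, smul_mul_assoc, smul_smul]; simp only [mul_assoc]
      _ = r • (β₁ * γ₂ * (γ₁ * γ₂)) := by
          conv_lhs => rw [P.γ₁γ₂]
          rw [mul_smul_comm, smul_mul_assoc, smul_smul, mul_right_comm, inv_mul_cancel₀ hq,
            one_mul]
          simp only [mul_assoc]
  rw [mul_add, add_mul, smul_add, h₁, h₂]

end IsTypeIIIPair

end

theorem typeIII_internal_relations_general {k A : Type*} [Field k] [Ring A] [Algebra k A]
    (q r : k) (hq0 : q ≠ 0) (hr0 : r ≠ 0)
    (α₁ γ₁ α₂ γ₂ : Aˣ) (β₁ β₂ : A)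
    -- internal relations (ID2) and (IND2)
    (hI1 : (α₁ : A) * (γ₁ : A) = (γ₁ : A) * (α₁ : A))
    (hI2 : (α₂ : A) * (γ₂ : A) = (γ₂ : A) * (α₂ : A))
    (hB1 : (α₁ : A) * β₁ = r • (β₁ * (γ₁ : A))) (hB2 : (α₂ : A) * β₂ = r • (β₂ * (γ₂ : A)))
    -- mutual relations (MD2) and (MND)
    (hAA : (α₁ : A) * (α₂ : A) = q • ((α₂ : A) * (α₁ : A)))
    (hAC : (α₁ : A) * (γ₂ : A) = q⁻¹ • ((γ₂ : A) * (α₁ : A)))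
    (hCA : (α₂ : A) * (γ₁ : A) = q • ((γ₁ : A) * (α₂ : A)))
    (hCC : (γ₁ : A) * (γ₂ : A) = q • ((γ₂ : A) * (γ₁ : A)))
    (hAB : (α₁ : A) * β₂ = q • (β₂ * (γ₁ : A)))
    (hBC : β₁ * (γ₂ : A) = q • ((α₂ : A) * β₁))
    (V₁ V₂ : (Matrix (Fin 2) (Fin 2) A)ˣ)
    (hV₁ : V₁.val = !![(α₁ : A), β₁; 0, (γ₁ : A)])
    (hV₂ : V₂.val = !![(α₂ : A), β₂; 0, (γ₂ : A)]) :
    ∀ n : ℤ,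
      (V₁ ^ n * V₂ ^ n).val 0 0 *
        (V₁ ^ n * V₂ ^ n).val 1 1
        = (V₁ ^ n * V₂ ^ n).val 1 1 *
          (V₁ ^ n * V₂ ^ n).val 0 0 ∧
      (V₁ ^ n * V₂ ^ n).val 0 0 *
        (V₁ ^ n * V₂ ^ n).val 0 1
        = r ^ n • ((V₁ ^ n * V₂ ^ n).val 0 1 *
          (V₁ ^ n * V₂ ^ n).val 1 1) := by
  intro n
  have P : IsTypeIIIPair q r (α₁ : A) γ₁ α₂ γ₂ β₁ β₂ :=
    ⟨hI1, hI2, hB1, hB2, hAA, hAC, hCA, hCC, hAB, hBC⟩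
  obtain ⟨c₁, hc₁⟩ := exists_zpow_val_eq_upperTriangular hr0 hB1 hV₁ n
  obtain ⟨c₂, hc₂⟩ := exists_zpow_val_eq_upperTriangular hr0 hB2 hV₂ n
  have Pn := (P.zpow hq0 hr0 n).smul c₁ c₂
  have hqn : q ^ (n * n) ≠ 0 := zpow_ne_zero _ hq0
  rw [Units.val_mul, hc₁, hc₂, upperTriangular_mul_upperTriangular]
  exact ⟨Pn.commute_mul hqn, Pn.twist_mul hqn⟩

/-- Type III pairs (restricted): the entries of `U₁ⁿ U₂ⁿ` satisfy
`α(n,n) γ(n,n) = γ(n,n) α(n,n)` and `α(n,n) β(n,n) = rⁿ β(n,n) γ(n,n)`. -/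
theorem typeIII_internal_relations {k A : Type*} [Field k] [Ring A] [Algebra k A]
    (q r : k) (hq0 : q ≠ 0) (hq1 : q ≠ 1) (hr0 : r ≠ 0) (hr1 : r ≠ 1)
    (α₁ γ₁ α₂ γ₂ : Aˣ) (β₁ β₂ : A)
    -- internal relations (ID2) and (IND2)
    (hI1 : (α₁ : A) * (γ₁ : A) = (γ₁ : A) * (α₁ : A))
    (hI2 : (α₂ : A) * (γ₂ : A) = (γ₂ : A) * (α₂ : A))
    (hB1 : (α₁ : A) * β₁ = r • (β₁ * (γ₁ : A))) (hB2 : (α₂ : A) * β₂ = r • (β₂ * (γ₂ : A)))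
    -- mutual relations (MD2) and (MND)
    (hAA : (α₁ : A) * (α₂ : A) = q • ((α₂ : A) * (α₁ : A)))
    (hAC : (α₁ : A) * (γ₂ : A) = q⁻¹ • ((γ₂ : A) * (α₁ : A)))
    (hCA : (α₂ : A) * (γ₁ : A) = q • ((γ₁ : A) * (α₂ : A)))
    (hCC : (γ₁ : A) * (γ₂ : A) = q • ((γ₂ : A) * (γ₁ : A)))
    (hAB : (α₁ : A) * β₂ = q • (β₂ * (γ₁ : A)))
    (hBC : β₁ * (γ₂ : A) = q • ((α₂ : A) * β₁))
    (V₁ V₂ : (Matrix (Fin 2) (Fin 2) A)ˣ)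
    (hV₁ : V₁.val = !![(α₁ : A), β₁; 0, (γ₁ : A)])
    (hV₂ : V₂.val = !![(α₂ : A), β₂; 0, (γ₂ : A)]) :
    ∀ n : ℤ,
      (V₁ ^ n * V₂ ^ n).val 0 0 *
        (V₁ ^ n * V₂ ^ n).val 1 1
        = (V₁ ^ n * V₂ ^ n).val 1 1 *
          (V₁ ^ n * V₂ ^ n).val 0 0 ∧
      (V₁ ^ n * V₂ ^ n).val 0 0 *
        (V₁ ^ n * V₂ ^ n).val 0 1
        = r ^ n • ((V₁ ^ n * V₂ ^ n).val 0 1 *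
          (V₁ ^ n * V₂ ^ n).val 1 1) :=
  typeIII_internal_relations_general q r hq0 hr0 α₁ γ₁ α₂ γ₂ β₁ β₂ hI1 hI2 hB1 hB2 hAA hAC hCA hCC
    hAB hBC V₁ V₂ hV₁ hV₂
end

section
/- Under type II relations, for all integers n, m, s, t: α(n,m)β(s,t) = q^{nt-ms} β(s,t)γ(n,m), where α(n,m) = α₁^n α₂^m, γ(n,m) = γ₁^n γ₂^m, β(s,t) = t α₁^s β₂ γ₂^{t-1} + s β₁ γ₁^{s-1} γ₂^t. -/
/-! Call `x` a `c`-intertwiner from `a` to `b` when `a * x = c • (x * b)`. Intertwiners compose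
(the scalars multiply), add up when they share the scalar, and survive integer powers of units
(the scalar is raised to the same power). Both monomials of `β(s,t)` intertwine `α₁` with `γ₁` up
to `q ^ t` and `α₂` with `γ₂` up to `q ^ (-s)`; hence so does `β(s,t)`, and the powers `α₁ⁿ` and
`α₂ᵐ` then move across it at the cost `q ^ (n * t) * q ^ (-(m * s))`. -/

def QIntertwines {k A : Type*} [SMul k A] [Mul A] (c : k) (a x b : A) : Prop :=
  a * x = c • (x * b)

namespace QIntertwines

section CommSemiring

variable {k A : Type*} [CommSemiring k] [Semiring A] [Algebra k A]

theorem one_iff {a x b : A} : QIntertwines (1 : k) a x b ↔ a * x = x * b := by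
  rw [QIntertwines, one_smul]

theorem units_zpow_self (u : Aˣ) (n : ℤ) : QIntertwines (1 : k) (u : A) ((u ^ n : Aˣ) : A) u :=
  one_iff.2 (Commute.units_zpow_right (Commute.refl _) n)

theorem mul {c d : k} {a x b y e : A} (h₁ : QIntertwines c a x b) (h₂ : QIntertwines d b y e) :
    QIntertwines (c * d) a (x * y) e := by
  rw [QIntertwines, ← mul_assoc, h₁, smul_mul_assoc, mul_assoc, h₂, mul_smul_comm, smul_smul,
    mul_assoc]

theorem mul_left {c d : k} {a a' x b b' : A} (h : QIntertwines c a x b)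
    (h' : QIntertwines d a' x b') : QIntertwines (c * d) (a * a') x (b * b') := by
  rw [QIntertwines, mul_assoc, h', mul_smul_comm, ← mul_assoc, h, smul_mul_assoc, smul_smul,
    mul_comm d, mul_assoc]

theorem add {c : k} {a x y b : A} (hx : QIntertwines c a x b) (hy : QIntertwines c a y b) :
    QIntertwines c a (x + y) b := by
  rw [QIntertwines, mul_add, add_mul, hx, hy, smul_add]

theorem pow {c : k} {a x b : A} (h : QIntertwines c a x b) (n : ℕ) :
    QIntertwines (c ^ n) (a ^ n) x (b ^ n) := by
  induction n with
  | zero => simpa only [pow_zero] using one_iff.2 ((one_mul x).trans (mul_one x).symm)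
  | succ n ih => simpa only [pow_succ] using ih.mul_left h

end CommSemiring

theorem zsmul {k A : Type*} [CommSemiring k] [Ring A] [Algebra k A] {c : k} {a x b : A}
    (h : QIntertwines c a x b) (r : ℤ) : QIntertwines c a (r • x) b := by
  rw [QIntertwines, mul_smul_comm, h, smul_mul_assoc, smul_comm]

section Semifield

variable {k A : Type*} [Semifield k] [Semiring A] [Algebra k A] {c : k}

theorem swap (hc : c ≠ 0) {a x : A} (h : QIntertwines c a x a) : QIntertwines c⁻¹ x a x := by
  rw [QIntertwines, h, smul_smul, inv_mul_cancel₀ hc, one_smul]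

theorem units_inv (hc : c ≠ 0) {u v : Aˣ} {x : A} (h : QIntertwines c (u : A) x v) :
    QIntertwines c⁻¹ ((u⁻¹ : Aˣ) : A) x ((v⁻¹ : Aˣ) : A) := by
  have hxv : x * v = c⁻¹ • (u * x) := by rw [h, smul_smul, inv_mul_cancel₀ hc, one_smul]
  calc ((u⁻¹ : Aˣ) : A) * x = ((u⁻¹ : Aˣ) : A) * (x * v) * ((v⁻¹ : Aˣ) : A) := by
        rw [mul_assoc, mul_assoc, Units.mul_inv, mul_one]
    _ = c⁻¹ • (x * ((v⁻¹ : Aˣ) : A)) := by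
        rw [hxv, mul_smul_comm, smul_mul_assoc, ← mul_assoc, Units.inv_mul, one_mul]

theorem units_zpow (hc : c ≠ 0) {u v : Aˣ} {x : A} (h : QIntertwines c (u : A) x v) (n : ℤ) :
    QIntertwines (c ^ n) ((u ^ n : Aˣ) : A) x ((v ^ n : Aˣ) : A) := by
  cases n with
  | ofNat n =>
    simpa only [Int.ofNat_eq_natCast, zpow_natCast, Units.val_pow_eq_pow_val] using h.pow n
  | negSucc n =>
    rw [zpow_negSucc, zpow_negSucc, zpow_negSucc]
    exact units_inv (pow_ne_zero _ hc)
      (by simpa only [Units.val_pow_eq_pow_val] using h.pow (n + 1))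

theorem units_zpow_right (hc : c ≠ 0) {u w : Aˣ} (h : QIntertwines c (u : A) w u) (n : ℤ) :
    QIntertwines (c ^ n) (u : A) ((w ^ n : Aˣ) : A) u := by
  have h' := ((h.swap hc).units_zpow (inv_ne_zero hc) n).swap (zpow_ne_zero n (inv_ne_zero hc))
  rwa [inv_zpow, inv_inv] at h'

end Semifield

end QIntertwines

theorem typeII_MND_monomials_general {k A : Type*} [Field k] [Ring A] [Algebra k A]
    (q : k) (hq0 : q ≠ 0)
    (α₁ γ₁ α₂ γ₂ : Aˣ) (β₁ β₂ : A)
    (hB1 : (α₁ : A) * β₁ = β₁ * (γ₁ : A)) (hB2 : (α₂ : A) * β₂ = β₂ * (γ₂ : A))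
    (hAA : (α₁ : A) * (α₂ : A) = q • ((α₂ : A) * (α₁ : A)))
    (hCC : (γ₁ : A) * (γ₂ : A) = q • ((γ₂ : A) * (γ₁ : A)))
    (hAB : (α₁ : A) * β₂ = q • (β₂ * (γ₁ : A)))
    (hBC : β₁ * (γ₂ : A) = q • ((α₂ : A) * β₁)) :
    ∀ n m s t : ℤ,
      (((α₁ ^ n : Aˣ) : A) * ((α₂ ^ m : Aˣ) : A)) *
        (t • (((α₁ ^ s : Aˣ) : A) * β₂ * ((γ₂ ^ (t - 1) : Aˣ) : A)) +
         s • (β₁ * ((γ₁ ^ (s - 1) : Aˣ) : A) * ((γ₂ ^ t : Aˣ) : A)))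
      = q ^ (n * t - m * s) •
        ((t • (((α₁ ^ s : Aˣ) : A) * β₂ * ((γ₂ ^ (t - 1) : Aˣ) : A)) +
          s • (β₁ * ((γ₁ ^ (s - 1) : Aˣ) : A) * ((γ₂ ^ t : Aˣ) : A))) *
         (((γ₁ ^ n : Aˣ) : A) * ((γ₂ ^ m : Aˣ) : A))) := by
  open QIntertwines in
  intro n m s t
  set X := ((α₁ ^ s : Aˣ) : A) * β₂ * ((γ₂ ^ (t - 1) : Aˣ) : A)
  set Y := β₁ * ((γ₁ ^ (s - 1) : Aˣ) : A) * ((γ₂ ^ t : Aˣ) : A)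
  have hα₂β₁ : QIntertwines q⁻¹ (α₂ : A) β₁ γ₂ := by
    rw [QIntertwines, hBC, smul_smul, inv_mul_cancel₀ hq0, one_smul]
  have hα₁X : QIntertwines (q ^ t) (α₁ : A) X γ₁ := by
    convert ((units_zpow_self α₁ s).mul hAB).mul (units_zpow_right hq0 hCC (t - 1)) using 1
    rw [one_mul, ← zpow_one_add₀ hq0, add_sub_cancel]
  have hα₁Y : QIntertwines (q ^ t) (α₁ : A) Y γ₁ := by
    convert ((one_iff.2 hB1).mul (units_zpow_self γ₁ (s - 1))).mul
      (units_zpow_right hq0 hCC t) using 1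
    rw [one_mul, one_mul]
  have hα₂X : QIntertwines (q ^ (-s)) (α₂ : A) X γ₂ := by
    convert ((units_zpow_right (inv_ne_zero hq0) (swap hq0 hAA) s).mul (one_iff.2 hB2)).mul
      (units_zpow_self γ₂ (t - 1)) using 1
    rw [mul_one, mul_one, inv_zpow']
  have hα₂Y : QIntertwines (q ^ (-s)) (α₂ : A) Y γ₂ := by
    convert (hα₂β₁.mul (units_zpow_right (inv_ne_zero hq0) (swap hq0 hCC) (s - 1))).mul
      (units_zpow_self γ₂ t) using 1
    rw [mul_one, inv_zpow', ← zpow_neg_one, ← zpow_add₀ hq0]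
    ring_nf
  have hβ := (((hα₁X.zsmul t).add (hα₁Y.zsmul s)).units_zpow (zpow_ne_zero _ hq0) n).mul_left
    (((hα₂X.zsmul t).add (hα₂Y.zsmul s)).units_zpow (zpow_ne_zero _ hq0) m)
  rw [QIntertwines, ← zpow_mul, ← zpow_mul, ← zpow_add₀ hq0] at hβ
  convert hβ using 3
  ring

/-- Under type II relations, `α(n,m) β(s,t) = q^{nt-ms} β(s,t) γ(n,m)`, where
`α(n,m) = α₁ⁿ α₂ᵐ`, `γ(n,m) = γ₁ⁿ γ₂ᵐ` and
`β(s,t) = t α₁ˢ β₂ γ₂^{t-1} + s β₁ γ₁^{s-1} γ₂ᵗ`. -/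
theorem typeII_MND_monomials {k A : Type*} [Field k] [CharZero k] [Ring A] [Algebra k A]
    (q : k) (hq0 : q ≠ 0)
    (α₁ γ₁ α₂ γ₂ : Aˣ) (β₁ β₂ : A)
    (hI1 : (α₁ : A) * (γ₁ : A) = (γ₁ : A) * (α₁ : A))
    (hI2 : (α₂ : A) * (γ₂ : A) = (γ₂ : A) * (α₂ : A))
    (hB1 : (α₁ : A) * β₁ = β₁ * (γ₁ : A)) (hB2 : (α₂ : A) * β₂ = β₂ * (γ₂ : A))
    (hAA : (α₁ : A) * (α₂ : A) = q • ((α₂ : A) * (α₁ : A)))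
    (hAC : (α₁ : A) * (γ₂ : A) = q⁻¹ • ((γ₂ : A) * (α₁ : A)))
    (hCA : (α₂ : A) * (γ₁ : A) = q • ((γ₁ : A) * (α₂ : A)))
    (hCC : (γ₁ : A) * (γ₂ : A) = q • ((γ₂ : A) * (γ₁ : A)))
    (hAB : (α₁ : A) * β₂ = q • (β₂ * (γ₁ : A)))
    (hBC : β₁ * (γ₂ : A) = q • ((α₂ : A) * β₁)) :
    ∀ n m s t : ℤ,
      (((α₁ ^ n : Aˣ) : A) * ((α₂ ^ m : Aˣ) : A)) *
        (t • (((α₁ ^ s : Aˣ) : A) * β₂ * ((γ₂ ^ (t - 1) : Aˣ) : A)) +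
         s • (β₁ * ((γ₁ ^ (s - 1) : Aˣ) : A) * ((γ₂ ^ t : Aˣ) : A)))
      = q ^ (n * t - m * s) •
        ((t • (((α₁ ^ s : Aˣ) : A) * β₂ * ((γ₂ ^ (t - 1) : Aˣ) : A)) +
          s • (β₁ * ((γ₁ ^ (s - 1) : Aˣ) : A) * ((γ₂ ^ t : Aˣ) : A))) *
         (((γ₁ ^ n : Aˣ) : A) * ((γ₂ ^ m : Aˣ) : A))) :=
  typeII_MND_monomials_general q hq0 α₁ γ₁ α₂ γ₂ β₁ β₂ hB1 hB2 hAA hCC hAB hBC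
end
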